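/- arXiv:2104.08833 — 2 statements merged into one kernel-verified Lean document; each statement's English description precedes it below -/
import Mathlib

section
/- The Fubini-type polynomials satisfy the explicit formula a_n^{(α)}(x) = 2^α · Σ_{k=0}^{n} C(n,k) · (Σ_{i=0}^{k} ⟨−2α⟩_i · (−1)^i · S(k,i)) · x^{n−k}, where S(k,i) are Stirling numbers of the second kind and ⟨x⟩_i is the falling factorial. -/
/-!
Write `u = e^t - 1`. The column `Σ_k S(k,i) t^k/k!` of Stirling numbers is `u^i / i!`: by
induction on `i`, since for index `i + 1` both series solve `y' = (i+1) y + u^i/i!`, `y(0) = 0`.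
Substituting `u` into `(1 - X)^{-m}` turns `(2 - e^t)^{-m} = (1 - u)^{-m} = Σ_i (m+i-1 choose i) u^i`
into `Σ_k (Σ_i m(m+1)⋯(m+i-1) S(k,i)) t^k/k!`, and `m(m+1)⋯(m+i-1) = (-1)^i ⟨-m⟩_i`.
Multiplying by `2^α e^{xt}` with `m = 2α` gives the coefficients `a_n^{(α)}(x)` as a binomial
convolution.
-/

open Finset PowerSeries

/-- Stirling numbers of the second kind. -/
def stirling2 : ℕ → ℕ → ℕ
  | 0, 0 => 1
  | 0, _ + 1 => 0
  | _ + 1, 0 => 0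
  | n + 1, k + 1 => (k + 1) * stirling2 n (k + 1) + stirling2 n k

/-- The falling factorial `⟨x⟩_i = x(x-1)⋯(x-i+1)`. -/
def fall (x : ℚ) (m : ℕ) : ℚ := ∏ j ∈ Finset.range m, (x - j)

open scoped Nat

theorem stirling2_eq_stirlingSecond : stirling2 = Nat.stirlingSecond := by
  funext n k
  induction n generalizing k with
  | zero => cases k <;> rfl
  | succ n ih => cases k <;> simp [stirling2, Nat.stirlingSecond_succ_succ, ih]

theorem fall_neg_natCast_mul_neg_one_pow (m i : ℕ) :
    fall (-m) i * (-1) ^ i = m.ascFactorial i := by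
  induction i with
  | zero => simp [fall]
  | succ i ih =>
    rw [fall, prod_range_succ, ← fall, Nat.ascFactorial_succ, pow_succ, Nat.cast_mul, ← ih]
    push_cast
    ring

namespace PowerSeries

theorem eq_zero_of_derivative_eq_C_mul {R : Type*} [CommRing R] [IsAddTorsionFree R]
    {f : R⟦X⟧} (c : R) (hf : d⁄dX R f = C c * f) (h0 : constantCoeff f = 0) : f = 0 := by
  ext n
  induction n with
  | zero => simpa using h0
  | succ n ih =>
    have h := congrArg (coeff n) hf
    rw [coeff_derivative, coeff_C_mul, ih, map_zero, mul_zero, mul_comm, ← Nat.cast_succ,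
      ← nsmul_eq_mul] at h
    rw [map_zero]
    exact (nsmul_eq_zero_iff_right n.succ_ne_zero).mp h

variable (K : Type*) [Field K] [CharZero K]

noncomputable def stirlingSecondEGF (i : ℕ) : K⟦X⟧ :=
  mk fun k => (Nat.stirlingSecond k i : K) / k !

variable {K}

theorem derivative_stirlingSecondEGF_succ (i : ℕ) :
    d⁄dX K (stirlingSecondEGF K (i + 1)) =
      C ((i + 1 : ℕ) : K) * stirlingSecondEGF K (i + 1) + stirlingSecondEGF K i := by
  ext k
  simp only [stirlingSecondEGF, coeff_derivative, coeff_mk, map_add, coeff_C_mul,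
    Nat.stirlingSecond_succ_succ, Nat.factorial_succ]
  push_cast
  field_simp

theorem exp_sub_one_pow (i : ℕ) : (exp K - 1) ^ i = C (i ! : K) * stirlingSecondEGF K i := by
  induction i with
  | zero =>
    ext k
    cases k <;> simp [stirlingSecondEGF, coeff_one]
  | succ i ih =>
    have hu : d⁄dX K ((exp K - 1) ^ (i + 1)) =
        C ((i + 1 : ℕ) : K) * ((exp K - 1) ^ (i + 1) + (exp K - 1) ^ i) := by
      rw [derivative_pow, map_sub, derivative_exp, derivative_one, sub_zero, Nat.add_sub_cancel,
        map_natCast]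
      ring
    rw [← sub_eq_zero]
    refine eq_zero_of_derivative_eq_C_mul ((i + 1 : ℕ) : K) ?_ ?_
    · rw [map_sub, hu, Derivation.leibniz, derivative_C, derivative_stirlingSecondEGF_succ, ih,
        Nat.factorial_succ, Nat.cast_mul, map_mul, smul_zero, add_zero, smul_eq_mul]
      ring
    · simp [stirlingSecondEGF]

theorem coeff_exp_sub_one_pow (i k : ℕ) :
    coeff k ((exp K - 1) ^ i) = (i ! * Nat.stirlingSecond k i / k ! : K) := by
  rw [exp_sub_one_pow, coeff_C_mul, stirlingSecondEGF, coeff_mk, mul_div_assoc]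

theorem hasSubst_exp_sub_one : HasSubst (exp K - 1) :=
  HasSubst.of_constantCoeff_zero' (by simp)

theorem coeff_subst_exp_sub_one (f : K⟦X⟧) (k : ℕ) :
    coeff k (f.subst (exp K - 1)) =
      (∑ i ∈ range (k + 1), coeff i f * i ! * Nat.stirlingSecond k i) / k ! := by
  rw [coeff_subst' hasSubst_exp_sub_one, finsum_eq_sum_of_support_subset (s := range (k + 1)),
    sum_div]
  · refine sum_congr rfl fun i _ => ?_
    rw [coeff_exp_sub_one_pow, smul_eq_mul]
    ring
  · intro i hi
    rw [Function.mem_support, coeff_exp_sub_one_pow] at hi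
    by_contra hik
    rw [Nat.stirlingSecond_eq_zero_of_lt (by simpa using hik)] at hi
    simp at hi

theorem coeff_invOneSubPow (m i : ℕ) :
    coeff i (invOneSubPow K m : K⟦X⟧) = m.ascFactorial i / i ! := by
  rcases m with _ | d
  · cases i <;> simp [invOneSubPow_zero, coeff_one, Nat.zero_ascFactorial]
  · rw [invOneSubPow_val_succ_eq_mk_add_choose, coeff_mk,
      Nat.ascFactorial_eq_factorial_mul_choose, Nat.cast_mul, Nat.choose_symm_add,
      mul_div_cancel_left₀ _ (Nat.cast_ne_zero.mpr i.factorial_ne_zero)]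

theorem two_sub_exp_pow_mul_subst_invOneSubPow (m : ℕ) :
    (2 - exp K) ^ m * (invOneSubPow K m : K⟦X⟧).subst (exp K - 1) = 1 := by
  have h : (2 - exp K) ^ m = ((1 - X) ^ m : K⟦X⟧).subst (exp K - 1) := by
    rw [← coe_substAlgHom hasSubst_exp_sub_one, map_pow, map_sub, map_one, coe_substAlgHom,
      subst_X hasSubst_exp_sub_one]
    ring
  rw [h, ← coe_substAlgHom hasSubst_exp_sub_one, ← map_mul, ← invOneSubPow_inv_eq_one_sub_pow,
    Units.inv_val, map_one]

theorem subst_invOneSubPow_exp_sub_one (m : ℕ) :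
    (invOneSubPow K m : K⟦X⟧).subst (exp K - 1) =
      mk fun k => (∑ i ∈ range (k + 1), (m.ascFactorial i * Nat.stirlingSecond k i : K)) / k ! := by
  ext k
  rw [coeff_subst_exp_sub_one, coeff_mk]
  congr 1
  refine sum_congr rfl fun i _ => ?_
  rw [coeff_invOneSubPow, div_mul_cancel₀ _ (Nat.cast_ne_zero.mpr i.factorial_ne_zero)]

theorem coeff_mk_div_factorial_mul_mk_div_factorial (f g : ℕ → K) (n : ℕ) :
    coeff n ((mk fun k => f k / k !) * mk fun k => g k / k !) =
      (∑ k ∈ range (n + 1), n.choose k * f k * g (n - k)) / n ! := by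
  rw [coeff_mul, Nat.sum_antidiagonal_eq_sum_range_succ_mk, sum_div]
  refine sum_congr rfl fun k hk => ?_
  have hn : (n ! : K) ≠ 0 := Nat.cast_ne_zero.mpr n.factorial_ne_zero
  rw [coeff_mk, coeff_mk, Nat.cast_choose K (Nat.le_of_lt_succ (mem_range.mp hk))]
  field_simp

end PowerSeries

theorem fubiniType_explicit (α : ℕ) (a : ℕ → ℚ → ℚ)
    (ha : ∀ x : ℚ,
      ((2 : PowerSeries ℚ) - PowerSeries.exp ℚ) ^ (2 * α) *
          PowerSeries.mk (fun n => a n x / n.factorial) =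
        (2 : PowerSeries ℚ) ^ α * PowerSeries.mk (fun n => x ^ n / n.factorial))
    (n : ℕ) (x : ℚ) :
    a n x =
      2 ^ α * ∑ k ∈ Finset.range (n + 1), (n.choose k : ℚ) *
        (∑ i ∈ Finset.range (k + 1),
          fall (-(2 * α : ℚ)) i * (-1 : ℚ) ^ i * (stirling2 k i : ℚ)) * x ^ (n - k) := by
  set b : ℕ → ℚ :=
    fun k => ∑ i ∈ range (k + 1), ((2 * α).ascFactorial i * Nat.stirlingSecond k i : ℚ)
  have hinv : (2 - exp ℚ) ^ (2 * α) * PowerSeries.mk (fun k => b k / k !) = 1 := by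
    rw [← subst_invOneSubPow_exp_sub_one]
    exact two_sub_exp_pow_mul_subst_invOneSubPow (2 * α)
  have hA : PowerSeries.mk (fun n => a n x / n !) =
      C (2 ^ α) * (PowerSeries.mk (fun k => b k / k !) * PowerSeries.mk fun k => x ^ k / k !) := by
    calc PowerSeries.mk (fun n => a n x / n !)
        = PowerSeries.mk (fun n => a n x / n !) *
            ((2 - exp ℚ) ^ (2 * α) * PowerSeries.mk (fun k => b k / k !)) := by
          rw [hinv, mul_one]
      _ = ((2 - exp ℚ) ^ (2 * α) * PowerSeries.mk (fun n => a n x / n !)) *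
            PowerSeries.mk (fun k => b k / k !) := by ring
      _ = _ := by rw [ha x, map_pow, map_ofNat]; ring
  have hcoeff := congrArg (coeff n) hA
  rw [coeff_mk, coeff_C_mul, coeff_mk_div_factorial_mul_mk_div_factorial, mul_div_assoc',
    div_left_inj' (Nat.cast_ne_zero.mpr n.factorial_ne_zero)] at hcoeff
  rw [hcoeff, stirling2_eq_stirlingSecond]
  congr 1
  refine sum_congr rfl fun k _ => ?_
  simp only [b, ← fall_neg_natCast_mul_neg_one_pow, Nat.cast_mul, Nat.cast_ofNat]
end

section
/- The Fubini-type numbers satisfy, for each n ≥ 1, the recurrence Σ_{k=0}^{n} C(n,k) · (Σ_{i=0}^{n−k} ⟨2α⟩_i · (−1)^i · S(n−k,i)) · a_k^{(α)} = 0. -/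
open Finset PowerSeries

/-!
Multiplying exponential generating functions convolves their coefficients binomially, so the
left-hand side is `n!` times the `n`-th coefficient of `(2 - eᵗ)^(2α) · Σ aₖ tᵏ/k! = 2^α`, which
vanishes for `n ≥ 1`. The inner sum is `m!` times the `m`-th coefficient of
`(2 - eᵗ)^N = (1 - (eᵗ - 1))^N` with `N = 2α`: expand binomially and use that `(eᵗ - 1)^k / k!`
is the exponential generating function of `S(·, k)`, which follows from the Stirling recurrence
after differentiating `(eᵗ - 1)^(k+1)`.
-/

open Nat

theorem stirling2_eq_stirlingSecond_s7 : ∀ n k : ℕ, stirling2 n k = stirlingSecond n k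
  | 0, 0 | 0, _ + 1 | _ + 1, 0 => rfl
  | n + 1, k + 1 => by
    rw [stirling2, stirlingSecond_succ_succ, stirling2_eq_stirlingSecond_s7 n,
      stirling2_eq_stirlingSecond_s7 n]

theorem fall_natCast (N i : ℕ) : fall N i = N.descFactorial i := by
  rw [fall, ← descPochhammer_eval_eq_prod_range, descPochhammer_eval_eq_descFactorial]

namespace PowerSeries

theorem factorial_mul_coeff_mul {R : Type*} [CommSemiring R] (n : ℕ) (f g : R⟦X⟧) :
    (n ! : R) * coeff n (f * g) = ∑ k ∈ range (n + 1),
      n.choose k * ((n - k)! * coeff (n - k) f) * (k ! * coeff k g) := by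
  rw [mul_comm f, coeff_mul, Nat.sum_antidiagonal_eq_sum_range_succ_mk, mul_sum]
  refine sum_congr rfl fun k hk => ?_
  rw [← Nat.choose_mul_factorial_mul_factorial (mem_range_succ_iff.1 hk)]
  push_cast
  ring

variable {A : Type*} [CommRing A] [Algebra ℚ A]

theorem derivative_exp_sub_one_pow (k : ℕ) :
    d⁄dX A ((exp A - 1) ^ (k + 1)) = (k + 1) • ((exp A - 1) ^ (k + 1) + (exp A - 1) ^ k) := by
  rw [Derivation.leibniz_pow, map_sub, derivative_exp, Derivation.map_one_eq_zero, sub_zero,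
    Nat.add_sub_cancel, smul_eq_mul]
  ring

theorem factorial_mul_coeff_exp_sub_one_pow (m k : ℕ) :
    (m ! : A) * coeff m ((exp A - 1) ^ k) = k ! * stirlingSecond m k := by
  induction m generalizing k with
  | zero => cases k <;> simp
  | succ m ih =>
    cases k with
    | zero => simp [coeff_one]
    | succ k =>
      calc ((m + 1)! : A) * coeff (m + 1) ((exp A - 1) ^ (k + 1))
          = m ! * coeff m (d⁄dX A ((exp A - 1) ^ (k + 1))) := by
            rw [coeff_derivative, factorial_succ]; push_cast; ring
        _ = (k + 1) *
            (m ! * coeff m ((exp A - 1) ^ (k + 1)) + m ! * coeff m ((exp A - 1) ^ k)) := by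
            rw [derivative_exp_sub_one_pow, map_nsmul, map_add, nsmul_eq_mul]; push_cast; ring
        _ = (k + 1)! * stirlingSecond (m + 1) (k + 1) := by
            rw [ih, ih, stirlingSecond_succ_succ, factorial_succ]; push_cast; ring

theorem factorial_mul_coeff_two_sub_exp_pow (N m : ℕ) :
    (m ! : A) * coeff m ((2 - exp A) ^ N) =
      ∑ i ∈ range (m + 1), (N.descFactorial i : A) * (-1) ^ i * stirlingSecond m i := by
  have hbinom : (2 - exp A) ^ N =
      ∑ i ∈ range (N + 1), ((-1) ^ i * N.choose i : A) • (exp A - 1) ^ i := by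
    rw [show (2 : A⟦X⟧) - exp A = -(exp A - 1) + 1 by ring, add_pow]
    refine sum_congr rfl fun i _ => ?_
    rw [smul_eq_C_mul, one_pow, mul_one, neg_pow, map_mul, map_pow, map_neg, map_one, map_natCast]
    ring
  set g : ℕ → A := fun i => (N.descFactorial i : A) * (-1) ^ i * stirlingSecond m i
  have hN : ∑ i ∈ range (N + 1), g i = ∑ i ∈ range (N + m + 1), g i :=
    sum_subset (range_subset_range.2 (by omega)) fun i _ hi => by
      simp [g, Nat.descFactorial_eq_zero_iff_lt.2 (by simpa using hi : N < i)]
  have hm : ∑ i ∈ range (m + 1), g i = ∑ i ∈ range (N + m + 1), g i :=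
    sum_subset (range_subset_range.2 (by omega)) fun i _ hi => by
      simp [g, stirlingSecond_eq_zero_of_lt (by simpa using hi : m < i)]
  rw [hm, ← hN, hbinom, map_sum, mul_sum]
  refine sum_congr rfl fun i _ => ?_
  rw [coeff_smul, smul_eq_mul, mul_left_comm, factorial_mul_coeff_exp_sub_one_pow]
  simp only [g, Nat.descFactorial_eq_factorial_mul_choose]
  push_cast
  ring

end PowerSeries

theorem fubiniTypeNumbers_recurrence_general (α : ℕ) (a : ℕ → ℚ)
    (ha : ((2 : PowerSeries ℚ) - PowerSeries.exp ℚ) ^ (2 * α) *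
          PowerSeries.mk (fun n => a n / n.factorial) =
        (2 : PowerSeries ℚ) ^ α)
    (n : ℕ) (hn : 1 ≤ n) :
    ∑ k ∈ Finset.range (n + 1), (n.choose k : ℚ) *
        (∑ i ∈ Finset.range (n - k + 1),
          fall ((2 * α : ℚ)) i * (-1 : ℚ) ^ i * (stirling2 (n - k) i : ℚ)) * a k = 0 := by
  have hcoeff (m : ℕ) : (m ! : ℚ) * coeff m ((2 - exp ℚ) ^ (2 * α)) =
      ∑ i ∈ range (m + 1), fall (2 * α : ℚ) i * (-1) ^ i * stirling2 m i := by
    rw [factorial_mul_coeff_two_sub_exp_pow]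
    simp only [← fall_natCast, stirling2_eq_stirlingSecond_s7, Nat.cast_mul, Nat.cast_ofNat]
  have hegf (k : ℕ) : (k ! : ℚ) * coeff k (mk fun n => a n / n !) = a k := by
    rw [coeff_mk]; field_simp
  calc _ = (n ! : ℚ) * coeff n ((2 - exp ℚ) ^ (2 * α) * mk fun n => a n / n !) := by
        simp only [factorial_mul_coeff_mul, hcoeff, hegf]
    _ = 0 := by rw [ha, ← map_ofNat C, ← map_pow, coeff_C, if_neg (by omega), mul_zero]

theorem fubiniTypeNumbers_recurrence (α : ℕ) (hα : 1 ≤ α) (a : ℕ → ℚ)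
    (ha : ((2 : PowerSeries ℚ) - PowerSeries.exp ℚ) ^ (2 * α) *
          PowerSeries.mk (fun n => a n / n.factorial) =
        (2 : PowerSeries ℚ) ^ α)
    (n : ℕ) (hn : 1 ≤ n) :
    ∑ k ∈ Finset.range (n + 1), (n.choose k : ℚ) *
        (∑ i ∈ Finset.range (n - k + 1),
          fall ((2 * α : ℚ)) i * (-1 : ℚ) ^ i * (stirling2 (n - k) i : ℚ)) * a k = 0 :=
  fubiniTypeNumbers_recurrence_general α a ha n hn
end
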